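/- arXiv:2603.02148 — 4 statements merged into one kernel-verified Lean document; each statement's English description precedes it below -/
import Mathlib

section
/- Suppose A ∈ Z^{n×d} is an integer matrix of rank r > k with all entries bounded in magnitude by M. Then the cost of the optimal rank-k approximation of A in Frobenius norm, namely (∑_{i=k+1}^{d} σ_i(A)^2)^{1/2}, is at least (n·d·M^2)^{-k/(r-k)}. -/
/-!
The nonzero eigenvalues `σᵢ²` (`i < r`) of the integer Gram matrix `AᵀA` multiply, up to sign,
to a nonzero coefficient of its characteristic polynomial, an integer; so their product is at
least `1`. Each of them is at most `trace (AᵀA) ≤ n d M²`. Bounding the first `k` factors by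
`n d M²` and the remaining `r - k` by `σₖ²` gives `1 ≤ (n d M²)ᵏ (σₖ²)^(r-k)`, and the single
tail term `σₖ²` already exceeds the claimed bound.
-/

open Matrix Polynomial Finset

namespace Matrix

variable {m R : Type*} [Fintype m] [DecidableEq m] {U : Matrix m m R}

theorem charpoly_transpose_mul_mul_of_mul_transpose_eq_one [CommRing R] (hU : U * Uᵀ = 1)
    (N : Matrix m m R) : (Uᵀ * N * U).charpoly = N.charpoly := by
  rw [charpoly_mul_comm, ← mul_assoc, hU, one_mul]

theorem trace_transpose_mul_mul_of_mul_transpose_eq_one [CommRing R] (hU : U * Uᵀ = 1)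
    (N : Matrix m m R) : (Uᵀ * N * U).trace = N.trace := by
  rw [trace_mul_cycle, hU, one_mul]

theorem rank_transpose_mul_mul_of_mul_transpose_eq_one [Field R] (hU : U * Uᵀ = 1)
    (N : Matrix m m R) : (Uᵀ * N * U).rank = N.rank := by
  rw [rank_mul_eq_left_of_isUnit_det _ _ (isUnit_det_of_right_inverse hU),
    rank_mul_eq_right_of_isUnit_det _ _ (isUnit_det_of_left_inverse hU)]

end Matrix

theorem Polynomial.coeff_prod_X_sub_C_card_compl {ι R : Type*} [Fintype ι] [DecidableEq ι]
    [CommRing R] (w : ι → R) {S : Finset ι} (hS : ∀ i, i ∈ S ↔ w i ≠ 0) :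
    (∏ i, (X - C (w i))).coeff #Sᶜ = ∏ i ∈ S, -w i := by
  have hcompl : ∏ i ∈ Sᶜ, (X - C (w i)) = X ^ #Sᶜ := by
    rw [← prod_const]
    exact prod_congr rfl fun i hi => by simp_all
  rw [← prod_mul_prod_compl S, hcompl, coeff_mul_X_pow', if_pos le_rfl, Nat.sub_self,
    coeff_zero_eq_eval_zero, eval_prod]
  simp

theorem Matrix.one_le_abs_prod_of_charpoly_map_intCast {m ι : Type*} [Fintype m] [DecidableEq m]
    [Fintype ι] [DecidableEq ι] (G : Matrix m m ℤ) (w : ι → ℝ)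
    (hG : (G.map (Int.castRingHom ℝ)).charpoly = ∏ i, (X - C (w i)))
    {S : Finset ι} (hS : ∀ i, i ∈ S ↔ w i ≠ 0) :
    1 ≤ |∏ i ∈ S, w i| := by
  have hcoeff : (G.charpoly.coeff #Sᶜ : ℝ) = ∏ i ∈ S, -w i := by
    rw [← coeff_prod_X_sub_C_card_compl w hS, ← hG, charpoly_map, coeff_map, eq_intCast]
  have hne : G.charpoly.coeff #Sᶜ ≠ 0 := by
    rintro h
    rw [h, Int.cast_zero] at hcoeff
    exact prod_ne_zero_iff.2 (fun i hi => neg_ne_zero.2 ((hS i).1 hi)) hcoeff.symm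
  calc (1 : ℝ) ≤ |(G.charpoly.coeff #Sᶜ : ℝ)| := by exact_mod_cast Int.one_le_abs hne
    _ = |∏ i ∈ S, w i| := by simp only [hcoeff, abs_prod, abs_neg]

theorem Fin.mem_iff_val_lt_card_of_isLowerSet {d : ℕ} {s : Finset (Fin d)}
    (hs : IsLowerSet (s : Set (Fin d))) (i : Fin d) : i ∈ s ↔ i.val < #s := by
  constructor
  · intro hi
    have := card_le_card (show Iic i ⊆ s from fun j hj => hs (mem_Iic.1 hj) hi)
    rw [Fin.card_Iic] at this
    omega
  · intro hi
    by_contra hni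
    have := card_le_card (show s ⊆ Iio i from
      fun j hj => mem_Iio.2 (lt_of_not_ge fun hij => hni (hs hij hj)))
    rw [Fin.card_Iio] at this
    omega

theorem Antitone.isLowerSet_support {ι : Type*} [Preorder ι] {τ : ι → ℝ} (hτ : Antitone τ)
    (hτ0 : ∀ i, 0 ≤ τ i) : IsLowerSet (Function.support τ) :=
  fun _ _ hba ha => ((hτ0 _).lt_of_ne' ha |>.trans_le (hτ hba)).ne'

theorem prod_le_pow_mul_pow_of_antitone {d k r : ℕ} {τ : Fin d → ℝ} (hτ : Antitone τ)
    (hτ0 : ∀ i, 0 ≤ τ i) {T : ℝ} (hτT : ∀ i, τ i ≤ T) (hkr : k < r) (hrd : r ≤ d) :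
    ∏ i with i.val < r, τ i ≤ T ^ k * τ ⟨k, hkr.trans_le hrd⟩ ^ (r - k) := by
  set head := ({i | i.val < r} : Finset (Fin d)).filter (fun i => i.val < k)
  set tail := ({i | i.val < r} : Finset (Fin d)).filter (fun i => ¬ i.val < k)
  have hhead : #head = k := by
    have : head = ({i | i.val < k} : Finset (Fin d)) := by
      ext i
      simp only [head, mem_filter, mem_univ, true_and]
      omega
    rw [this, Fin.card_filter_val_lt]
    omega
  have htail : #tail = r - k := by
    have := card_filter_add_card_filter_not (s := ({i | i.val < r} : Finset (Fin d)))
      (p := fun i : Fin d => i.val < k)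
    change #head + #tail = _ at this
    rw [Fin.card_filter_val_lt] at this
    omega
  calc ∏ i with i.val < r, τ i = (∏ i ∈ head, τ i) * ∏ i ∈ tail, τ i :=
        (prod_filter_mul_prod_filter_not _ _ _).symm
    _ ≤ T ^ #head * τ ⟨k, hkr.trans_le hrd⟩ ^ #tail := by
        refine mul_le_mul ((prod_le_prod (fun i _ => hτ0 i) fun i _ => hτT i).trans_eq
          (prod_const T)) ((prod_le_prod (fun i _ => hτ0 i) fun i hi => hτ ?_).trans_eq
          (prod_const _)) (prod_nonneg fun i _ => hτ0 i)
          (pow_nonneg ((hτ0 ⟨k, hkr.trans_le hrd⟩).trans (hτT _)) _)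
        simp only [tail, mem_filter, not_lt] at hi
        exact hi.2
    _ = T ^ k * τ ⟨k, hkr.trans_le hrd⟩ ^ (r - k) := by rw [hhead, htail]

theorem Real.rpow_neg_div_sub_le_sqrt {T s : ℝ} {k r : ℕ} (hkr : k < r) (hs : 0 ≤ s)
    (hsT : s ≤ T) (h : 1 ≤ T ^ k * s ^ (r - k)) : T ^ (-(k : ℝ) / ((r : ℝ) - k)) ≤ √s := by
  have hT0 : 0 ≤ T := hs.trans hsT
  have hT : 1 ≤ T := by
    have : 1 ≤ T ^ r := by
      calc 1 ≤ T ^ k * s ^ (r - k) := h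
        _ ≤ T ^ k * T ^ (r - k) := by gcongr
        _ = T ^ r := by rw [← pow_add, Nat.add_sub_cancel' hkr.le]
    exact (one_le_pow_iff_of_nonneg hT0 (by omega)).1 this
  have hm : ((r - k : ℕ) : ℝ) = (r : ℝ) - k := Nat.cast_sub hkr.le
  have hle_one : T ^ (-(k : ℝ) / ((r : ℝ) - k)) ≤ 1 :=
    Real.rpow_le_one_of_one_le_of_nonpos hT (div_nonpos_of_nonpos_of_nonneg
      (neg_nonpos.2 k.cast_nonneg) (by rw [← hm]; positivity))
  have hle_s : T ^ (-(k : ℝ) / ((r : ℝ) - k)) ≤ s := by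
    have hinv : (T ^ k)⁻¹ ≤ s ^ (r - k) := (inv_le_iff_one_le_mul₀' (pow_pos (by linarith) k)).2 h
    calc T ^ (-(k : ℝ) / ((r : ℝ) - k)) = ((T ^ k)⁻¹) ^ (((r - k : ℕ) : ℝ)⁻¹) := by
          rw [hm, div_eq_mul_inv, Real.rpow_mul hT0, Real.rpow_neg hT0, Real.rpow_natCast]
      _ ≤ (s ^ (r - k)) ^ (((r - k : ℕ) : ℝ)⁻¹) := by gcongr
      _ = s := Real.pow_rpow_inv_natCast hs (by omega)
  rw [Real.le_sqrt (Real.rpow_nonneg hT0 _) hs]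
  exact (pow_le_of_le_one (Real.rpow_nonneg hT0 _) hle_one two_ne_zero).trans hle_s

theorem Matrix.trace_transpose_mul_self_le {m n : Type*} [Fintype m] [Fintype n]
    (B : Matrix m n ℝ) {M : ℝ} (hB : ∀ i j, |B i j| ≤ M) :
    (Bᵀ * B).trace ≤ Fintype.card m * Fintype.card n * M ^ 2 := by
  calc (Bᵀ * B).trace = ∑ j, ∑ i, B i j ^ 2 := by simp [trace, mul_apply, sq]
    _ ≤ ∑ _j : n, ∑ _i : m, M ^ 2 := by
        refine sum_le_sum fun j _ => sum_le_sum fun i _ => ?_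
        exact sq_le_sq' (neg_le_of_abs_le (hB i j)) (le_of_abs_le (hB i j))
    _ = Fintype.card m * Fintype.card n * M ^ 2 := by simp; ring

/-- Let `A ∈ ℤ^{n×d}` be an integer matrix of rank `r > k` with entries bounded in
magnitude by `M`, and let `σ₁ ≥ ... ≥ σ_d ≥ 0` be its singular values (so that
`AᵀA = Uᵀ diag(σᵢ²) U` for an orthogonal `U`). Then the optimal rank-`k` Frobenius
approximation cost `(∑_{i>k} σᵢ²)^{1/2}` is at least `(n d M²)^{-k/(r-k)}`.
(Indices `i` here are 0-indexed, so `i ≥ k` corresponds to the 1-indexed `i ≥ k+1`.) -/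
theorem stmt5 {n d k r : ℕ} (M : ℕ) (hrk : k < r)
    (A : Matrix (Fin n) (Fin d) ℤ)
    (hM : ∀ i j, |A i j| ≤ (M : ℤ))
    (hrank : (A.map (fun x : ℤ => (x : ℝ))).rank = r)
    (σ : Fin d → ℝ) (U : Matrix (Fin d) (Fin d) ℝ)
    (hσmono : Antitone σ) (hσ0 : ∀ i, 0 ≤ σ i)
    (hU : U * Uᵀ = 1)
    (hSVD : (A.map (fun x : ℤ => (x : ℝ)))ᵀ * A.map (fun x : ℤ => (x : ℝ)) =
      Uᵀ * Matrix.diagonal (fun i => σ i ^ 2) * U) :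
    ((n : ℝ) * (d : ℝ) * (M : ℝ) ^ 2) ^ (-(k : ℝ) / ((r : ℝ) - (k : ℝ))) ≤
      Real.sqrt (∑ i ∈ Finset.univ.filter (fun i : Fin d => k ≤ i.val), σ i ^ 2) := by
  set B := A.map (fun x : ℤ => (x : ℝ))
  set τ : Fin d → ℝ := fun i => σ i ^ 2
  have hτ0 : ∀ i, 0 ≤ τ i := fun i => sq_nonneg _
  have hτ : Antitone τ := fun i j hij => pow_le_pow_left₀ (hσ0 j) (hσmono hij) 2
  have hrd : r ≤ d := hrank ▸ by simpa using B.rank_le_card_width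
  have hcard : #{i | τ i ≠ 0} = r := by
    rw [← hrank, ← rank_transpose_mul_self, hSVD,
      rank_transpose_mul_mul_of_mul_transpose_eq_one hU, rank_diagonal, Fintype.card_subtype]
  have hsupport : ∀ i : Fin d, i ∈ ({i | i.val < r} : Finset (Fin d)) ↔ τ i ≠ 0 := fun i => by
    have hlower : IsLowerSet (({i | τ i ≠ 0} : Finset (Fin d)) : Set (Fin d)) := by
      simpa [Function.support] using hτ.isLowerSet_support hτ0
    simpa [← hcard] using (Fin.mem_iff_val_lt_card_of_isLowerSet hlower i).symm
  have hprod : 1 ≤ ∏ i with i.val < r, τ i := by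
    refine (one_le_abs_prod_of_charpoly_map_intCast (Aᵀ * A) τ ?_ hsupport).trans_eq
      (abs_of_nonneg (prod_nonneg fun i _ => hτ0 i))
    rw [Matrix.map_mul, transpose_map]
    change (Bᵀ * B).charpoly = _
    rw [hSVD, charpoly_transpose_mul_mul_of_mul_transpose_eq_one hU, charpoly_diagonal]
  have hτT : ∀ i, τ i ≤ n * d * M ^ 2 := fun i => by
    refine (single_le_sum (fun j _ => hτ0 j) (mem_univ i)).trans ?_
    rw [← trace_diagonal, ← trace_transpose_mul_mul_of_mul_transpose_eq_one hU, ← hSVD]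
    simpa using trace_transpose_mul_self_le B (M := M) fun i j => by
      simp only [B, map_apply]
      exact_mod_cast hM i j
  calc _ ≤ √(τ ⟨k, hrk.trans_le hrd⟩) := Real.rpow_neg_div_sub_le_sqrt hrk (hτ0 _) (hτT _)
        (hprod.trans (prod_le_pow_mul_pow_of_antitone hτ hτ0 hτT hrk hrd))
    _ ≤ _ := Real.sqrt_le_sqrt (single_le_sum (fun j _ => hτ0 j) (by simp))
end

section
/- Let A ∈ Z^{n×d} be an integer matrix of rank r > k with entries bounded in magnitude by M, and let λ_1 ≥ ... ≥ λ_d be the eigenvalues of A^T A. Then λ_{k+1} ≥ (n·d·M^2)^{-k/(r-k)}. -/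
/-!
The product of the nonzero eigenvalues of `AᵀA` is, up to sign, a coefficient of the
characteristic polynomial of the integer matrix `AᵀA`; being a nonzero integer, it is at least `1`
in absolute value. Every eigenvalue is at most `trace (AᵀA) = ∑ A_ij² ≤ n d M²`. Bounding the `k`
largest nonzero eigenvalues by `n d M²` and the remaining `r - k` by `λ_{k+1}` gives
`1 ≤ (n d M²)^k λ_{k+1}^(r-k)`.
-/

open Matrix Polynomial Finset

namespace Polynomial

variable {ι : Type*} [Fintype ι]

theorem coeff_card_eq_zero_prod_X_sub_C {R : Type*} [CommRing R] [DecidableEq R] (lam : ι → R) :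
    (∏ i, (X - C (lam i))).coeff #{i | lam i = 0} = ∏ i with lam i ≠ 0, -lam i := by
  rw [← prod_filter_mul_prod_filter_not univ (fun i => lam i = 0)]
  have hzeros : ∏ i with lam i = 0, (X - C (lam i)) = X ^ #{i | lam i = 0} :=
    (prod_congr rfl fun i hi => by rw [(mem_filter.mp hi).2, map_zero, sub_zero]).trans
      (prod_const _)
  rw [hzeros, coeff_X_pow_mul', if_pos le_rfl, Nat.sub_self, coeff_zero_eq_eval_zero, eval_prod]
  simp

theorem one_le_abs_prod_ne_zero_of_map_eq_prod {K : Type*} [CommRing K] [LinearOrder K]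
    [IsStrictOrderedRing K] (p : ℤ[X]) (lam : ι → K)
    (hp : p.map (Int.castRingHom K) = ∏ i, (X - C (lam i))) :
    1 ≤ |∏ i with lam i ≠ 0, lam i| := by
  have hcoeff : (p.coeff #{i | lam i = 0} : K) = ∏ i with lam i ≠ 0, -lam i := by
    simpa [coeff_card_eq_zero_prod_X_sub_C] using congrArg (coeff · #{i | lam i = 0}) hp
  have habs : |(p.coeff #{i | lam i = 0} : K)| = |∏ i with lam i ≠ 0, lam i| := by
    simp only [hcoeff, abs_prod, abs_neg]
  have hne : p.coeff #{i | lam i = 0} ≠ 0 := by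
    intro h
    rw [h, Int.cast_zero, eq_comm, prod_eq_zero_iff] at hcoeff
    obtain ⟨i, hi, hzero⟩ := hcoeff
    exact (mem_filter.mp hi).2 (neg_eq_zero.mp hzero)
  rw [← habs, ← Int.cast_abs]
  exact_mod_cast Int.one_le_abs hne

end Polynomial

namespace Matrix

section OrthogonalDiagonalization

variable {m : Type*} [Fintype m] [DecidableEq m] {K : Type*} {S U : Matrix m m K} {lam : m → K}

theorem charpoly_eq_prod_of_eq_conj_diagonal [CommRing K] (hU : U * Uᵀ = 1)
    (hS : S = Uᵀ * diagonal lam * U) : S.charpoly = ∏ i, (X - C (lam i)) := by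
  rw [hS, charpoly_mul_comm, ← mul_assoc, hU, one_mul, charpoly_diagonal]

theorem trace_eq_sum_of_eq_conj_diagonal [CommRing K] (hU : U * Uᵀ = 1)
    (hS : S = Uᵀ * diagonal lam * U) : S.trace = ∑ i, lam i := by
  rw [hS, trace_mul_cycle, hU, one_mul, trace_diagonal]

theorem rank_eq_card_ne_zero_of_eq_conj_diagonal [Field K] [DecidableEq K] (hU : U * Uᵀ = 1)
    (hS : S = Uᵀ * diagonal lam * U) : S.rank = #{i | lam i ≠ 0} := by
  have hdet : U.det * Uᵀ.det = 1 := by rw [← det_mul, hU, det_one]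
  have hUdet : IsUnit U.det := .of_mul_eq_one _ hdet
  have hUtdet : IsUnit Uᵀ.det := .of_mul_eq_one _ ((mul_comm _ _).trans hdet)
  rw [hS, rank_mul_eq_left_of_isUnit_det _ _ hUdet, rank_mul_eq_right_of_isUnit_det _ _ hUtdet,
    rank_diagonal, Fintype.card_subtype]

end OrthogonalDiagonalization

theorem trace_transpose_mul_self_le_s8 {m n : Type*} [Fintype m] [Fintype n] {B : Matrix m n ℝ}
    {M : ℝ} (hB : ∀ i j, |B i j| ≤ M) :
    (Bᵀ * B).trace ≤ Fintype.card m * Fintype.card n * M ^ 2 := by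
  calc (Bᵀ * B).trace = ∑ j, ∑ i, B i j ^ 2 := by
        simp only [trace, diag, mul_apply, transpose_apply, sq]
    _ ≤ ∑ _j : n, ∑ _i : m, M ^ 2 :=
        sum_le_sum fun j _ => sum_le_sum fun i _ =>
          sq_le_sq' (abs_le.mp (hB i j)).1 (le_of_abs_le (hB i j))
    _ = Fintype.card m * Fintype.card n * M ^ 2 := by
        simp only [sum_const, card_univ, nsmul_eq_mul]
        ring

end Matrix

section AntitoneSpectrum

variable {d : ℕ} {lam : Fin d → ℝ}

theorem Antitone.pos_of_lt_card_ne_zero (hmono : Antitone lam) (hnonneg : ∀ i, 0 ≤ lam i)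
    {k : ℕ} (hkd : k < d) (hk : k < #{i | lam i ≠ 0}) : 0 < lam ⟨k, hkd⟩ := by
  refine (hnonneg _).lt_of_ne fun hzero => hk.not_ge ?_
  have hsub : ({i | lam i ≠ 0} : Finset (Fin d)) ⊆ Iio ⟨k, hkd⟩ := fun i hi => by
    refine mem_Iio.mpr (lt_of_not_ge fun hki => (mem_filter.mp hi).2 ?_)
    exact le_antisymm (hzero ▸ hmono hki) (hnonneg i)
  simpa using card_le_card hsub

theorem Antitone.prod_ne_zero_le_pow_mul_pow (hmono : Antitone lam) (hnonneg : ∀ i, 0 ≤ lam i)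
    {T : ℝ} (hT : ∀ i, lam i ≤ T) {k : ℕ} (hkd : k < d) (hk : 0 < lam ⟨k, hkd⟩) :
    ∏ i with lam i ≠ 0, lam i ≤ T ^ k * lam ⟨k, hkd⟩ ^ (#{i | lam i ≠ 0} - k) := by
  set j : Fin d := ⟨k, hkd⟩
  set s : Finset (Fin d) := {i | lam i ≠ 0}
  have hhead : s.filter (· < j) = Iio j := by
    ext i
    simp only [s, mem_filter, mem_univ, true_and, mem_Iio, and_iff_right_iff_imp]
    exact fun hi => (hk.trans_le (hmono hi.le)).ne'
  have hhead_card : #(s.filter (· < j)) = k := by simp [hhead, j]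
  have htail_card : #(s.filter (¬ · < j)) = #s - k := by
    have := card_filter_add_card_filter_not (s := s) (· < j)
    omega
  rw [← prod_filter_mul_prod_filter_not s (· < j)]
  refine mul_le_mul ?_ ?_ (prod_nonneg fun i _ => hnonneg i) (pow_nonneg (hk.le.trans (hT j)) k)
  · calc ∏ i ∈ s.filter (· < j), lam i ≤ ∏ _i ∈ s.filter (· < j), T :=
          prod_le_prod (fun i _ => hnonneg i) fun i _ => hT i
      _ = T ^ k := by rw [prod_const, hhead_card]
  · calc ∏ i ∈ s.filter (¬ · < j), lam i ≤ ∏ _i ∈ s.filter (¬ · < j), lam j :=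
          prod_le_prod (fun i _ => hnonneg i) fun i hi => hmono (not_lt.mp (mem_filter.mp hi).2)
      _ = lam j ^ (#s - k) := by rw [prod_const, htail_card]

end AntitoneSpectrum

theorem Real.rpow_neg_div_sub_le_of_one_le_pow_mul_pow {T x : ℝ} {k r : ℕ} (hT : 0 < T)
    (hx : 0 ≤ x) (hkr : k < r) (h : 1 ≤ T ^ k * x ^ (r - k)) :
    T ^ (-(k : ℝ) / (r - k)) ≤ x := by
  have hrk : ((r - k : ℕ) : ℝ) = r - k := Nat.cast_sub hkr.le
  have hrk_ne : (r : ℝ) - k ≠ 0 := by rw [← hrk]; exact_mod_cast (Nat.sub_pos_of_lt hkr).ne'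
  have hpow : (T ^ (-(k : ℝ) / (r - k))) ^ (r - k) = (T ^ k)⁻¹ := by
    rw [← Real.rpow_natCast, ← Real.rpow_mul hT.le, hrk, div_mul_cancel₀ _ hrk_ne,
      Real.rpow_neg hT.le, Real.rpow_natCast]
  refine le_of_pow_le_pow_left₀ (Nat.sub_pos_of_lt hkr).ne' hx ?_
  rwa [hpow, inv_le_iff_one_le_mul₀ (pow_pos hT k), mul_comm]

/-- Let `A ∈ ℤ^{n×d}` be an integer matrix of rank `r > k` with entries bounded in
magnitude by `M`, and let `λ₁ ≥ ... ≥ λ_d` be the eigenvalues of `AᵀA` (given via a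
diagonalization with orthogonal `U`). Then `λ_{k+1} ≥ (n·d·M²)^{-k/(r-k)}`.
(0-indexed, `λ_{k+1}` is `lam ⟨k, _⟩`.) -/
theorem stmt8 {n d k r : ℕ} (M : ℕ) (hkd : k < d) (hrk : k < r)
    (A : Matrix (Fin n) (Fin d) ℤ)
    (hM : ∀ i j, |A i j| ≤ (M : ℤ))
    (hrank : (A.map (fun x : ℤ => (x : ℝ))).rank = r)
    (lam : Fin d → ℝ) (U : Matrix (Fin d) (Fin d) ℝ)
    (hmono : Antitone lam) (hnonneg : ∀ i, 0 ≤ lam i)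
    (hU : U * Uᵀ = 1)
    (hdiag : (A.map (fun x : ℤ => (x : ℝ)))ᵀ * A.map (fun x : ℤ => (x : ℝ)) =
      Uᵀ * Matrix.diagonal lam * U) :
    ((n : ℝ) * (d : ℝ) * (M : ℝ) ^ 2) ^ (-(k : ℝ) / ((r : ℝ) - (k : ℝ))) ≤
      lam ⟨k, hkd⟩ := by
  have hcard : #{i | lam i ≠ 0} = r := by
    rw [← rank_eq_card_ne_zero_of_eq_conj_diagonal hU hdiag, rank_transpose_mul_self, hrank]
  have hcharpoly : (Aᵀ * A).charpoly.map (Int.castRingHom ℝ) = ∏ i, (X - C (lam i)) := by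
    rw [← charpoly_map, ← charpoly_eq_prod_of_eq_conj_diagonal hU hdiag]
    congr 1
    ext i j
    simp [mul_apply]
  have hprod : 1 ≤ ∏ i with lam i ≠ 0, lam i := by
    simpa [abs_of_nonneg (prod_nonneg fun i _ => hnonneg i)] using
      one_le_abs_prod_ne_zero_of_map_eq_prod _ lam hcharpoly
  have hbound (i : Fin d) : lam i ≤ n * d * M ^ 2 := by
    refine (single_le_sum (fun j _ => hnonneg j) (mem_univ i)).trans ?_
    rw [← trace_eq_sum_of_eq_conj_diagonal hU hdiag]
    simpa using trace_transpose_mul_self_le_s8 (B := A.map (fun x : ℤ => (x : ℝ)))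
      (M := M) fun i j => by simpa using (mod_cast hM i j : |(A i j : ℝ)| ≤ M)
  have hpos := hmono.pos_of_lt_card_ne_zero hnonneg hkd (hcard ▸ hrk)
  refine Real.rpow_neg_div_sub_le_of_one_le_pow_mul_pow (hpos.trans_le (hbound _)) hpos.le hrk ?_
  exact hcard ▸ hprod.trans (hmono.prod_ne_zero_le_pow_mul_pow hnonneg hbound hkd hpos)
end

section
/- Let A^{(s)} ∈ R^{s×d} be a matrix, let V^{(s)} ∈ R^{k×d} be its top-k right singular vectors, and suppose ∑_{i=k-⌈√k⌉}^{k} σ_i(A^{(s)})^2 ≤ (ε/3)·OPT_s, where OPT_s = ∑_{i=k+1}^{d} σ_i(A^{(s)})^2. Let V' be obtained from V^{(s)} by removing the ⌈√k⌉ singular vectors with smallest singular values (among the top k) and replacing them with arbitrary unit vectors. Then ||A^{(s)} - A^{(s)} (V')^T V'||_F^2 ≤ (1 + ε/3)·OPT_s, where the projection is onto the span of V'. -/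
open Matrix

/-- Squared Frobenius norm of a real matrix. -/
noncomputable def frobSq {n d : ℕ} (M : Matrix (Fin n) (Fin d) ℝ) : ℝ :=
  ∑ i, ∑ j, (M i j) ^ 2

lemma dotSelfNonneg {d : ℕ} (v : Fin d → ℝ) : 0 ≤ v ⬝ᵥ v :=
  Finset.sum_nonneg fun a _ => mul_self_nonneg _

lemma frobSq_eq_trace {n d : ℕ} (M : Matrix (Fin n) (Fin d) ℝ) :
    frobSq M = (Mᵀ * M).trace := by
  simp only [frobSq, Matrix.trace, Matrix.diag, Matrix.mul_apply, Matrix.transpose_apply, sq]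
  exact Finset.sum_comm

lemma symm_idem_quadform {d : ℕ} (Q : Matrix (Fin d) (Fin d) ℝ) (u : Fin d → ℝ)
    (hs : Qᵀ = Q) (hi : Q * Q = Q) :
    u ⬝ᵥ Q.mulVec u = (Q.mulVec u) ⬝ᵥ (Q.mulVec u) := by
  conv_lhs => rw [← hi]
  rw [← Matrix.mulVec_mulVec, Matrix.dotProduct_mulVec, ← Matrix.mulVec_transpose, hs]

lemma triple_diag {d : ℕ} (U Q : Matrix (Fin d) (Fin d) ℝ) (i : Fin d) :
    (U * Q * Uᵀ) i i = U i ⬝ᵥ Q.mulVec (U i) := by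
  simp only [Matrix.mul_apply, dotProduct, Matrix.mulVec, Matrix.transpose_apply,
    Finset.sum_mul, Finset.mul_sum]
  rw [Finset.sum_comm]
  congr 1; ext a; congr 1; ext b; ring

lemma trace_form {s d : ℕ} (A : Matrix (Fin s) (Fin d) ℝ)
    (U Q D : Matrix (Fin d) (Fin d) ℝ)
    (hQs : Qᵀ = Q) (hQi : Q * Q = Q) (hSVD : Aᵀ * A = Uᵀ * D * U) :
    ((A * Q)ᵀ * (A * Q)).trace = (D * (U * Q * Uᵀ)).trace := by
  have h2 : (A * Q)ᵀ * (A * Q) = Q * (Aᵀ * A) * Q := by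
    rw [Matrix.transpose_mul, hQs]; simp [Matrix.mul_assoc]
  rw [h2, hSVD, Matrix.trace_mul_cycle, hQi, Matrix.trace_mul_comm]
  have e2 : Uᵀ * D * U * Q = Uᵀ * (D * (U * Q)) := by simp [Matrix.mul_assoc]
  rw [e2, Matrix.trace_mul_comm]
  simp [Matrix.mul_assoc]

/-- Let `A ∈ ℝ^{s×d}` have singular values `σ₁ ≥ ... ≥ σ_d ≥ 0` and right singular
vectors given by the rows of an orthogonal matrix `U` (so `AᵀA = Uᵀ diag(σᵢ²) U`).
Suppose `∑_{i=k-⌈√k⌉}^{k} σᵢ² ≤ (ε/3)·OPT` where `OPT = ∑_{i=k+1}^d σᵢ²` (1-indexed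
sums; a 1-indexed index `i` corresponds to `i.val + 1` below). Let `V'` be obtained
from the top-`k` right singular vectors by replacing the `⌈√k⌉` of them with smallest
singular values by arbitrary unit vectors `w j`, and let `P` be the orthogonal
projection onto the span of `V'`. Then `‖A - A P‖_F² ≤ (1 + ε/3)·OPT`. -/
theorem stmt15 {s d k : ℕ} (ε : ℝ) (hε : 0 < ε) (hkd : k ≤ d)
    (A : Matrix (Fin s) (Fin d) ℝ)
    (σ : Fin d → ℝ) (U : Matrix (Fin d) (Fin d) ℝ)
    (hσmono : Antitone σ) (hσ0 : ∀ i, 0 ≤ σ i)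
    (hU : U * Uᵀ = 1)
    (hSVD : Aᵀ * A = Uᵀ * Matrix.diagonal (fun i => σ i ^ 2) * U)
    (hlight :
      ∑ i ∈ Finset.univ.filter
          (fun i : Fin d => k - ⌈Real.sqrt (k : ℝ)⌉₊ ≤ i.val + 1 ∧ i.val + 1 ≤ k),
          σ i ^ 2 ≤
        (ε / 3) * ∑ i ∈ Finset.univ.filter (fun i : Fin d => k ≤ i.val), σ i ^ 2)
    (w : Fin ⌈Real.sqrt (k : ℝ)⌉₊ → (Fin d → ℝ)) (hw : ∀ j, w j ⬝ᵥ w j = 1)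
    (P : Matrix (Fin d) (Fin d) ℝ) (hPsymm : Pᵀ = P) (hPidem : P * P = P)
    (hPrange : ∀ v, P.mulVec v ∈ Submodule.span ℝ
        ({x | ∃ i : Fin d, i.val + 1 ≤ k - ⌈Real.sqrt (k : ℝ)⌉₊ ∧ x = U i} ∪
          Set.range w))
    (hPfix : ∀ v ∈ Submodule.span ℝ
        ({x | ∃ i : Fin d, i.val + 1 ≤ k - ⌈Real.sqrt (k : ℝ)⌉₊ ∧ x = U i} ∪
          Set.range w),
      P.mulVec v = v) :
    frobSq (A - A * P) ≤
      (1 + ε / 3) * ∑ i ∈ Finset.univ.filter (fun i : Fin d => k ≤ i.val), σ i ^ 2 := by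
  classical
  set m := k - ⌈Real.sqrt (k : ℝ)⌉₊ with hm
  set Q : Matrix (Fin d) (Fin d) ℝ := 1 - P with hQdef
  have hQsymm : Qᵀ = Q := by
    simp [hQdef, transpose_sub, hPsymm]
  have hQidem : Q * Q = Q := by
    have h : (1 - P) * (1 - P) = 1 - P - (P - P * P) := by noncomm_ring
    simp [hQdef, h, hPidem]
  set q : Fin d → ℝ := fun i => U i ⬝ᵥ Q.mulVec (U i) with hq
  have hq0 : ∀ i, 0 ≤ q i := by
    intro i
    show 0 ≤ U i ⬝ᵥ Q.mulVec (U i)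
    rw [symm_idem_quadform Q (U i) hQsymm hQidem]
    exact dotSelfNonneg _
  have hUnorm : ∀ i : Fin d, U i ⬝ᵥ U i = 1 := by
    intro i
    have := congrArg (fun M => M i i) hU
    simpa [Matrix.mul_apply, dotProduct, Matrix.one_apply] using this
  have hq1 : ∀ i, q i ≤ 1 := by
    intro i
    have hPq : 0 ≤ U i ⬝ᵥ P.mulVec (U i) := by
      rw [symm_idem_quadform P (U i) hPsymm hPidem]
      exact dotSelfNonneg _
    have hsum : q i + U i ⬝ᵥ P.mulVec (U i) = 1 := by
      show U i ⬝ᵥ Q.mulVec (U i) + U i ⬝ᵥ P.mulVec (U i) = 1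
      have hQP : Q.mulVec (U i) + P.mulVec (U i) = U i := by
        simp [hQdef, Matrix.sub_mulVec]
      rw [← dotProduct_add, hQP, hUnorm]
    linarith
  have hqfix : ∀ i : Fin d, i.val + 1 ≤ m → q i = 0 := by
    intro i hi
    have hmem : U i ∈ Submodule.span ℝ
        ({x | ∃ j : Fin d, j.val + 1 ≤ m ∧ x = U j} ∪ Set.range w) :=
      Submodule.subset_span (Or.inl ⟨i, hi, rfl⟩)
    have hfix := hPfix (U i) hmem
    have hQ0 : Q.mulVec (U i) = 0 := by
      simp [hQdef, Matrix.sub_mulVec, hfix]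
    show U i ⬝ᵥ Q.mulVec (U i) = 0
    rw [hQ0, dotProduct_zero]
  -- trace computation
  have hkey : frobSq (A - A * P) = ∑ i, σ i ^ 2 * q i := by
    have h1 : A - A * P = A * Q := by
      simp [hQdef, Matrix.mul_sub]
    rw [frobSq_eq_trace, h1,
      trace_form A U Q (Matrix.diagonal fun i => σ i ^ 2) hQsymm hQidem hSVD]
    simp only [Matrix.trace, Matrix.diag, Matrix.diagonal_mul]
    exact Finset.sum_congr rfl fun i _ => by rw [triple_diag U Q i]
  rw [hkey]
  set OPT := ∑ i ∈ Finset.univ.filter (fun i : Fin d => k ≤ i.val), σ i ^ 2 with hOPT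
  have hOPT0 : 0 ≤ OPT := Finset.sum_nonneg fun i _ => sq_nonneg _
  rw [← Finset.sum_filter_add_sum_filter_not Finset.univ
    (fun i : Fin d => k ≤ i.val) (fun i => σ i ^ 2 * q i)]
  have htail : ∑ i ∈ Finset.univ.filter (fun i : Fin d => k ≤ i.val), σ i ^ 2 * q i ≤ OPT := by
    apply Finset.sum_le_sum
    intro i _
    calc σ i ^ 2 * q i ≤ σ i ^ 2 * 1 := mul_le_mul_of_nonneg_left (hq1 i) (sq_nonneg _)
      _ = σ i ^ 2 := mul_one _
  have hhead : ∑ i ∈ Finset.univ.filter (fun i : Fin d => ¬ k ≤ i.val), σ i ^ 2 * q i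
      ≤ (ε / 3) * OPT := by
    refine le_trans ?_ hlight
    set S := Finset.univ.filter (fun i : Fin d => ¬ k ≤ i.val) with hS
    have hsub : S.filter (fun i : Fin d => ¬ (i.val + 1 ≤ m))
        ⊆ Finset.univ.filter (fun i : Fin d => m ≤ i.val + 1 ∧ i.val + 1 ≤ k) := by
      intro i hi
      simp only [hS, Finset.mem_filter, Finset.mem_univ, true_and] at hi ⊢
      omega
    calc ∑ i ∈ S, σ i ^ 2 * q i
        = ∑ i ∈ S.filter (fun i : Fin d => i.val + 1 ≤ m), σ i ^ 2 * q i
          + ∑ i ∈ S.filter (fun i : Fin d => ¬ (i.val + 1 ≤ m)), σ i ^ 2 * q i :=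
          (Finset.sum_filter_add_sum_filter_not S _ _).symm
      _ = ∑ i ∈ S.filter (fun i : Fin d => ¬ (i.val + 1 ≤ m)), σ i ^ 2 * q i := by
          rw [Finset.sum_eq_zero, zero_add]
          intro i hi
          rw [hqfix i (Finset.mem_filter.mp hi).2, mul_zero]
      _ ≤ ∑ i ∈ S.filter (fun i : Fin d => ¬ (i.val + 1 ≤ m)), σ i ^ 2 := by
          apply Finset.sum_le_sum
          intro i _
          calc σ i ^ 2 * q i ≤ σ i ^ 2 * 1 :=
                mul_le_mul_of_nonneg_left (hq1 i) (sq_nonneg _)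
            _ = σ i ^ 2 := mul_one _
      _ ≤ ∑ i ∈ Finset.univ.filter (fun i : Fin d => m ≤ i.val + 1 ∧ i.val + 1 ≤ k),
            σ i ^ 2 :=
          Finset.sum_le_sum_of_subset_of_nonneg hsub fun i _ _ => sq_nonneg _
  linarith
end

section
/- Let A^{(s)} be the first s rows of a matrix A, let V be the k×d matrix of top-k right singular vectors of A^{(s)} (so ||A^{(s)} - A^{(s)} V^T V||_F^2 = OPT_s), and let A^{(t)} be the matrix with rows a_{s+1}, ..., a_t appended. If ∑_{i=s+1}^{t} ||a_i||_2^2 ≤ ε·||A^{(s)}||_F^2, then ||A^{(t)} - A^{(t)} V^T V||_F^2 ≤ OPT_t + ε·||A^{(t)}||_F^2, where OPT_t is the optimal rank-k approximation cost of A^{(t)}. -/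
open Matrix

/-- The optimal rank-`k` approximation cost of a matrix `A`, namely the infimum over
`k × d` matrices `V` with orthonormal rows of `‖A - A VᵀV‖_F²`. -/
noncomputable def optCost (k : ℕ) {n d : ℕ} (A : Matrix (Fin n) (Fin d) ℝ) : ℝ :=
  sInf {c | ∃ V : Matrix (Fin k) (Fin d) ℝ, V * Vᵀ = 1 ∧ c = frobSq (A - A * (Vᵀ * V))}

lemma frobSq_nonneg {n d : ℕ} (M : Matrix (Fin n) (Fin d) ℝ) : 0 ≤ frobSq M := by
  apply Finset.sum_nonneg; intro i _; apply Finset.sum_nonneg; intro j _; positivity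

lemma vecMul_sq {d k : ℕ} (V : Matrix (Fin k) (Fin d) ℝ) (hV : V * Vᵀ = 1)
    (b : Fin k → ℝ) : ∑ j, (b ᵥ* V) j ^ 2 = ∑ l, b l ^ 2 := by
  have hone : ∀ l m, ∑ j, V l j * V m j = (1 : Matrix (Fin k) (Fin k) ℝ) l m := by
    intro l m; rw [← hV]; simp [Matrix.mul_apply, Matrix.transpose_apply]
  calc ∑ j, (b ᵥ* V) j ^ 2
      = ∑ j, ∑ l, ∑ m, (b l * V l j) * (b m * V m j) := by
        refine Finset.sum_congr rfl fun j _ => ?_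
        rw [sq]
        simp only [vecMul, dotProduct]
        rw [Finset.sum_mul_sum]
    _ = ∑ l, ∑ m, (b l * b m) * ∑ j, V l j * V m j := by
        rw [Finset.sum_comm]
        refine Finset.sum_congr rfl fun l _ => ?_
        rw [Finset.sum_comm]
        refine Finset.sum_congr rfl fun m _ => ?_
        rw [Finset.mul_sum]
        refine Finset.sum_congr rfl fun j _ => ?_
        ring
    _ = ∑ l, b l ^ 2 := by
        simp_rw [hone, Matrix.one_apply, mul_ite, mul_one, mul_zero]
        refine Finset.sum_congr rfl fun l _ => ?_
        simp [sq]

lemma row_proj_le {d k : ℕ} (V : Matrix (Fin k) (Fin d) ℝ) (hV : V * Vᵀ = 1)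
    (a : Fin d → ℝ) :
    ∑ j, (a j - (a ᵥ* (Vᵀ * V)) j) ^ 2 ≤ ∑ j, (a j) ^ 2 := by
  set b : Fin k → ℝ := a ᵥ* Vᵀ with hb
  have hP : a ᵥ* (Vᵀ * V) = b ᵥ* V := by
    rw [hb, vecMul_vecMul]
  have hbl : ∀ l, b l = ∑ j, a j * V l j := by
    intro l; simp [hb, vecMul, dotProduct, Matrix.transpose_apply]
  have hcross : ∑ j, a j * (b ᵥ* V) j = ∑ l, b l ^ 2 := by
    calc ∑ j, a j * (b ᵥ* V) j
        = ∑ j, ∑ l, b l * (a j * V l j) := by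
          refine Finset.sum_congr rfl fun j _ => ?_
          simp only [vecMul, dotProduct]
          rw [Finset.mul_sum]
          refine Finset.sum_congr rfl fun l _ => ?_; ring
      _ = ∑ l, b l * ∑ j, a j * V l j := by
          rw [Finset.sum_comm]
          refine Finset.sum_congr rfl fun l _ => ?_
          rw [Finset.mul_sum]
      _ = ∑ l, b l ^ 2 := by
          refine Finset.sum_congr rfl fun l _ => ?_
          rw [← hbl l, sq]
  have hsq := vecMul_sq V hV b
  rw [hP]
  have expand : ∀ j, (a j - (b ᵥ* V) j) ^ 2
      = (a j) ^ 2 - 2 * (a j * (b ᵥ* V) j) + ((b ᵥ* V) j) ^ 2 := fun j => by ring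
  have expand2 : ∑ j, (a j - (b ᵥ* V) j) ^ 2
      = ∑ j, (a j) ^ 2 - 2 * ∑ j, a j * (b ᵥ* V) j + ∑ j, ((b ᵥ* V) j) ^ 2 := by
    simp_rw [expand]
    rw [Finset.sum_add_distrib, Finset.sum_sub_distrib, Finset.mul_sum]
  rw [expand2, hcross, hsq]
  have : 0 ≤ ∑ l, b l ^ 2 := by positivity
  linarith

/-- Split frobSq of (At - At*Q) into prefix (= As part) + tail. -/
lemma frob_split {s t d : ℕ} (hst : s ≤ t)
    (As : Matrix (Fin s) (Fin d) ℝ) (At : Matrix (Fin t) (Fin d) ℝ)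
    (hprefix : ∀ (i : Fin t) (h : i.val < s), At i = As ⟨i.val, h⟩)
    (Q : Matrix (Fin d) (Fin d) ℝ) :
    frobSq (At - At * Q) = frobSq (As - As * Q)
      + ∑ i ∈ Finset.univ.filter (fun i : Fin t => s ≤ i.val),
          ∑ j, ((At - At * Q) i j) ^ 2 := by
  have hrowEq : ∀ (i : Fin t) (h : i.val < s) (j : Fin d),
      (At - At * Q) i j = (As - As * Q) ⟨i.val, h⟩ j := by
    intro i h j
    simp only [Matrix.sub_apply, Matrix.mul_apply]
    rw [hprefix i h]
  have hsplit := Finset.sum_filter_add_sum_filter_not Finset.univ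
    (fun i : Fin t => (i : ℕ) < s) (fun i => ∑ j, ((At - At * Q) i j) ^ 2)
  have hnot : Finset.univ.filter (fun i : Fin t => ¬ (i : ℕ) < s)
      = Finset.univ.filter (fun i : Fin t => s ≤ (i : ℕ)) := by
    refine Finset.filter_congr fun i _ => ?_; simp [not_lt]
  have hfirst : ∑ i ∈ Finset.univ.filter (fun i : Fin t => (i : ℕ) < s),
      ∑ j, ((At - At * Q) i j) ^ 2 = frobSq (As - As * Q) := by
    rw [frobSq]
    refine Finset.sum_bij'
      (i := fun a ha => (⟨(a : ℕ), (Finset.mem_filter.mp ha).2⟩ : Fin s))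
      (j := fun b _ => (⟨(b : ℕ), lt_of_lt_of_le b.isLt hst⟩ : Fin t))
      ?_ ?_ ?_ ?_ ?_
    · intro a ha; exact Finset.mem_univ _
    · intro b hb
      simp only [Finset.mem_filter, Finset.mem_univ, true_and]
      exact b.isLt
    · intro a ha; ext; rfl
    · intro b hb; ext; rfl
    · intro a ha
      refine Finset.sum_congr rfl fun j _ => ?_
      rw [hrowEq a (Finset.mem_filter.mp ha).2 j]
  rw [frobSq, ← hsplit, hfirst, hnot]

lemma frob_prefix_le {s t d : ℕ} (hst : s ≤ t)
    (As : Matrix (Fin s) (Fin d) ℝ) (At : Matrix (Fin t) (Fin d) ℝ)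
    (hprefix : ∀ (i : Fin t) (h : i.val < s), At i = As ⟨i.val, h⟩)
    (Q : Matrix (Fin d) (Fin d) ℝ) :
    frobSq (As - As * Q) ≤ frobSq (At - At * Q) := by
  rw [frob_split hst As At hprefix Q]
  have : 0 ≤ ∑ i ∈ Finset.univ.filter (fun i : Fin t => s ≤ i.val),
      ∑ j, ((At - At * Q) i j) ^ 2 := by
    apply Finset.sum_nonneg; intro i _; apply Finset.sum_nonneg; intro j _; positivity
  linarith

/-- Let `A⁽ˢ⁾` be the first `s` rows of a matrix, `V` a `k×d` matrix with orthonormal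
rows attaining the optimal rank-`k` cost of `A⁽ˢ⁾`, and `A⁽ᵗ⁾` the matrix with the rows
`a_{s+1}, ..., a_t` appended. If `∑_{i=s+1}^t ‖aᵢ‖₂² ≤ ε·‖A⁽ˢ⁾‖_F²`, then
`‖A⁽ᵗ⁾ - A⁽ᵗ⁾VᵀV‖_F² ≤ OPT_t + ε·‖A⁽ᵗ⁾‖_F²`. -/
theorem stmt17 {s t d k : ℕ} (ε : ℝ) (hst : s ≤ t)
    (As : Matrix (Fin s) (Fin d) ℝ) (At : Matrix (Fin t) (Fin d) ℝ)
    (hprefix : ∀ (i : Fin t) (h : i.val < s), At i = As ⟨i.val, h⟩)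
    (V : Matrix (Fin k) (Fin d) ℝ) (hV : V * Vᵀ = 1)
    (hVopt : frobSq (As - As * (Vᵀ * V)) = optCost k As)
    (htail : ∑ i ∈ Finset.univ.filter (fun i : Fin t => s ≤ i.val),
        ∑ j, (At i j) ^ 2 ≤ ε * frobSq As) :
    frobSq (At - At * (Vᵀ * V)) ≤ optCost k At + ε * frobSq At := by
  set P := Vᵀ * V with hPdef
  -- tail residual bound
  have hrowle : ∀ i : Fin t, ∑ j, ((At - At * P) i j) ^ 2 ≤ ∑ j, (At i j) ^ 2 := by
    intro i
    have h := row_proj_le V hV (At i)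
    have hPe : ∀ j, (At - At * P) i j = At i j - (At i ᵥ* P) j := by
      intro j; simp [Matrix.sub_apply, Matrix.mul_apply, vecMul, dotProduct]
    simpa [hPe] using h
  have htailres : ∑ i ∈ Finset.univ.filter (fun i : Fin t => s ≤ i.val),
      ∑ j, ((At - At * P) i j) ^ 2
      ≤ ∑ i ∈ Finset.univ.filter (fun i : Fin t => s ≤ i.val), ∑ j, (At i j) ^ 2 :=
    Finset.sum_le_sum fun i _ => hrowle i
  -- OPT_s ≤ OPT_t
  have hOptMono : optCost k As ≤ optCost k At := by
    rw [optCost]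
    apply le_csInf
    · exact ⟨_, V, hV, rfl⟩
    · rintro c ⟨W, hW, rfl⟩
      have h1 : optCost k As ≤ frobSq (As - As * (Wᵀ * W)) := by
        apply csInf_le
        · refine ⟨0, ?_⟩
          rintro x ⟨U, hU, rfl⟩
          exact frobSq_nonneg _
        · exact ⟨W, hW, rfl⟩
      exact h1.trans (frob_prefix_le hst As At hprefix _)
  -- frobSq At = frobSq As + tail
  have hAtsplit : frobSq At = frobSq As
      + ∑ i ∈ Finset.univ.filter (fun i : Fin t => s ≤ i.val), ∑ j, (At i j) ^ 2 := by
    have h := frob_split hst As At hprefix 0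
    simpa using h
  have hT0 : 0 ≤ ∑ i ∈ Finset.univ.filter (fun i : Fin t => s ≤ i.val),
      ∑ j, (At i j) ^ 2 := by
    apply Finset.sum_nonneg; intro i _; apply Finset.sum_nonneg; intro j _; positivity
  have hεmono : ε * frobSq As ≤ ε * frobSq At := by
    rcases le_or_gt 0 ε with hε | hε
    · have : frobSq As ≤ frobSq At := by linarith
      exact mul_le_mul_of_nonneg_left this hε
    · -- ε < 0 forces tail = 0 and frobSq As = 0
      have hAs0 : 0 ≤ frobSq As := frobSq_nonneg As
      have h1 : ε * frobSq As ≤ 0 := mul_nonpos_of_nonpos_of_nonneg hε.le hAs0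
      have hT : ∑ i ∈ Finset.univ.filter (fun i : Fin t => s ≤ i.val),
          ∑ j, (At i j) ^ 2 = 0 := le_antisymm (htail.trans h1) hT0
      have hAsz : frobSq As = 0 := by
        by_contra hne
        have hpos : 0 < frobSq As := lt_of_le_of_ne hAs0 (Ne.symm hne)
        have : ε * frobSq As < 0 := mul_neg_of_neg_of_pos hε hpos
        linarith [htail, hT0]
      have : frobSq At = 0 := by rw [hAtsplit, hAsz, hT]; ring
      rw [hAsz, this]
  calc frobSq (At - At * P)
      = frobSq (As - As * P)
        + ∑ i ∈ Finset.univ.filter (fun i : Fin t => s ≤ i.val),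
            ∑ j, ((At - At * P) i j) ^ 2 := frob_split hst As At hprefix P
    _ ≤ optCost k At + ε * frobSq At := by
        have := htailres.trans (htail.trans hεmono)
        rw [hVopt]
        linarith [hOptMono]
end
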